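/- Let f(t) = pα e^{-αt} + qβ e^{-βt} and f₁(t) = t f(t), with 0 < p < 1, q = 1−p, β > α > 0. Then for m ≥ 0 and t > 0, (f^{*m} * f₁)(t) = pα ∑_{r=0}^m C(m,r) (αp)^r (βq)^{m−r} (e^{−βt} t^{m+1}/Γ(m+2)) ₁F₁(r+2; m+2; (β−α)t) + qβ ∑_{r=0}^m C(m,r) (αp)^r (βq)^{m−r} (e^{−βt} t^{m+1}/Γ(m+2)) ₁F₁(r; m+2; (β−α)t). -/

import Mathlib

open Real

/-- Convolution of two functions on `(0, ∞)`: `(g * h)(t) = ∫_0^t g(t-v) h(v) dv`. -/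
noncomputable def conv (g h : ℝ → ℝ) : ℝ → ℝ := fun t => ∫ v in (0:ℝ)..t, g (t - v) * h v

/-- `cpm f g m = f^{*m} * g`, the `m`-fold self-convolution of `f` convolved with `g`
(with `f^{*0} * g = g`).  In particular `cpm f f m = f^{*(m+1)}`. -/
noncomputable def cpm (f g : ℝ → ℝ) : ℕ → ℝ → ℝ
  | 0 => g
  | m + 1 => conv f (cpm f g m)

open Finset

/-- Pochhammer symbol `(a)_i = a (a+1) ⋯ (a+i-1)`. -/
noncomputable def poch (a : ℝ) (i : ℕ) : ℝ := ∏ k ∈ range i, (a + k)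

/-- Confluent hypergeometric function `₁F₁(a; b; z) = ∑_{i≥0} ((a)_i/(b)_i) z^i/i!`. -/
noncomputable def hyp1F1 (a b z : ℝ) : ℝ := ∑' i : ℕ, (poch a i / poch b i) * z ^ i / i.factorial

/-!
Put `K a n t = e^{-βt} tⁿ/n! ₁F₁(a; n+1; (β-α)t) = e^{-βt} ∑ (a)ᵢ (β-α)ⁱ/i! · tⁿ⁺ⁱ/(n+i)!`, so that
`f₁ = pα K 2 1 + qβ K 0 1`. The convolution `e^{-λ·} * (e^{-μ·} F)` is `e^{-μ·} G` for the
solution of `G' = F + (μ-λ) G`, `G 0 = 0`. Differentiating termwise, this shows that convolving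
`K a (n+1)` with `e^{-βs}` gives `K a (n+2)` and, by the contiguous relation
`(a+1)_{i+1}/(i+1)! = (a)_{i+1}/(i+1)! + (a+1)_i/i!`, that convolving it with `e^{-αs}` gives
`K (a+1) (n+2)`. So convolution with `f` acts on the index `a` as `pα · shift + qβ`, and the
binomial theorem gives the formula.
-/

open scoped Nat

lemma poch_succ (a : ℝ) (i : ℕ) : poch a (i + 1) = poch a i * (a + i) :=
  prod_range_succ _ _

lemma poch_succ' (a : ℝ) (i : ℕ) : poch a (i + 1) = a * poch (a + 1) i := by
  simp only [poch, prod_range_succ', Nat.cast_add, Nat.cast_one, Nat.cast_zero, add_zero]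
  rw [mul_comm]
  congr 1
  exact prod_congr rfl fun k _ => by ring

lemma poch_natCast_add_one_mul_factorial (n i : ℕ) : poch (n + 1) i * n ! = (n + i)! := by
  induction i with
  | zero => simp [poch]
  | succ i ih =>
    rw [poch_succ, mul_right_comm, ih, ← add_assoc, Nat.factorial_succ]
    push_cast
    ring

lemma abs_poch_div_factorial_le (a : ℝ) (i : ℕ) : |poch a i / i !| ≤ max 1 |a| ^ i := by
  rw [poch, ← prod_range_add_one_eq_factorial, Nat.cast_prod, ← prod_div_distrib, abs_prod]
  calc ∏ k ∈ range i, |(a + k) / ((k + 1 : ℕ) : ℝ)| ≤ ∏ _k ∈ range i, max 1 |a| := by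
        refine prod_le_prod (fun _ _ => abs_nonneg _) fun k _ => ?_
        rw [abs_div, div_le_iff₀ (by positivity), Nat.abs_cast]
        push_cast
        calc |a + k| ≤ |a| + k := by simpa using abs_add_le a k
          _ ≤ max 1 |a| * (k + 1) := by
            nlinarith [le_max_left 1 |a|, le_max_right 1 |a|, (k.cast_nonneg : (0 : ℝ) ≤ k)]
    _ = max 1 |a| ^ i := by rw [prod_const, card_range]

lemma hyp1F1_self {b : ℝ} (hb : 0 < b) (z : ℝ) : hyp1F1 b b z = exp z := by
  have hpos (i : ℕ) : poch b i ≠ 0 := (prod_pos fun k _ => by positivity).ne'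
  simp only [hyp1F1, div_self (hpos _), one_mul, exp_eq_exp_ℝ, NormedSpace.exp_eq_tsum_div]

lemma hyp1F1_zero_left (b z : ℝ) : hyp1F1 0 b z = 1 := by
  rw [hyp1F1, tsum_eq_single 0 fun i hi => ?_]
  · simp [poch]
  · obtain ⟨j, rfl⟩ := Nat.exists_eq_succ_of_ne_zero hi
    simp [poch_succ']

/-- The `n`-fold integral from `0` of the exponential generating function `∑ cᵢ tⁱ/i!`. -/
noncomputable def egf (c : ℕ → ℝ) (n : ℕ) (t : ℝ) : ℝ := ∑' i, c i * t ^ (n + i) / (n + i)!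

section egf

variable {b c e : ℕ → ℝ} {C K : ℝ}

lemma abs_egf_term_le (hc : ∀ i, |c i| ≤ C * K ^ i) (n i : ℕ) {R y : ℝ} (hy : |y| ≤ R) :
    |c i * y ^ (n + i) / (n + i)!| ≤ C * R ^ n * ((|K| * R) ^ i / i !) := by
  have hR : 0 ≤ R := (abs_nonneg y).trans hy
  have hC : 0 ≤ C := by simpa using (abs_nonneg _).trans (hc 0)
  have hfact : (i ! : ℝ) ≤ (n + i)! := by exact_mod_cast Nat.factorial_le (Nat.le_add_left i n)
  have hci : |c i| ≤ C * |K| ^ i :=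
    (hc i).trans (mul_le_mul_of_nonneg_left ((le_abs_self _).trans (abs_pow K i).le) hC)
  rw [abs_div, abs_mul, abs_pow, Nat.abs_cast, pow_add]
  calc |c i| * (|y| ^ n * |y| ^ i) / (n + i)! ≤ C * |K| ^ i * (R ^ n * R ^ i) / i ! := by gcongr
    _ = C * R ^ n * ((|K| * R) ^ i / i !) := by ring

lemma summable_egf_majorant (C K R : ℝ) (n : ℕ) :
    Summable fun i : ℕ => C * R ^ n * ((|K| * R) ^ i / i !) :=
  (Real.summable_pow_div_factorial _).mul_left _

lemma summable_egf (hc : ∀ i, |c i| ≤ C * K ^ i) (n : ℕ) (t : ℝ) :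
    Summable fun i => c i * t ^ (n + i) / (n + i)! :=
  .of_norm_bounded (summable_egf_majorant C K |t| n) fun i => abs_egf_term_le hc n i le_rfl

lemma hasDerivAt_egf (hc : ∀ i, |c i| ≤ C * K ^ i) (n : ℕ) (t : ℝ) :
    HasDerivAt (egf c (n + 1)) (egf c n t) t := by
  have hterm (i : ℕ) (y : ℝ) : HasDerivAt (fun y => c i * y ^ (n + 1 + i) / (n + 1 + i)!)
      (c i * y ^ (n + i) / (n + i)!) y := by
    refine (((hasDerivAt_pow (n + 1 + i) y).const_mul (c i)).div_const _).congr_deriv ?_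
    rw [show n + 1 + i = n + i + 1 by ring, Nat.factorial_succ, Nat.add_sub_cancel]
    push_cast
    field_simp
  exact hasDerivAt_tsum_of_isPreconnected (summable_egf_majorant C K (|t| + 1) n)
    Metric.isOpen_ball (convex_ball 0 (|t| + 1)).isPreconnected (fun i y _ => hterm i y)
    (fun i y hy => abs_egf_term_le hc n i (by simpa using (mem_ball_zero_iff.mp hy).le))
    (Metric.mem_ball_self (by positivity)) (summable_egf hc (n + 1) 0) (by simp)

lemma continuous_egf (hc : ∀ i, |c i| ≤ C * K ^ i) (n : ℕ) : Continuous (egf c (n + 1)) :=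
  continuous_iff_continuousAt.2 fun t => (hasDerivAt_egf hc n t).continuousAt

lemma egf_succ_zero (c : ℕ → ℝ) (n : ℕ) : egf c (n + 1) 0 = 0 := by
  simp [egf]

lemma egf_eq_add_egf_succ (hc : ∀ i, |c i| ≤ C * K ^ i) (n : ℕ) (t : ℝ) :
    egf c n t = c 0 * t ^ n / n ! + egf (fun i => c (i + 1)) (n + 1) t := by
  rw [egf, (summable_egf hc n t).tsum_eq_zero_add, egf, add_zero]
  congr 1
  exact tsum_congr fun i => by rw [show n + (i + 1) = n + 1 + i by omega]

lemma egf_add {Cb Kb Ce Ke : ℝ} (hb : ∀ i, |b i| ≤ Cb * Kb ^ i) (he : ∀ i, |e i| ≤ Ce * Ke ^ i)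
    (n : ℕ) (t : ℝ) : egf (fun i => b i + e i) n t = egf b n t + egf e n t := by
  simp only [egf, add_mul, add_div]
  exact (summable_egf hb n t).tsum_add (summable_egf he n t)

lemma egf_const_mul (d : ℝ) (e : ℕ → ℝ) (n : ℕ) (t : ℝ) :
    egf (fun i => d * e i) n t = d * egf e n t := by
  simp only [egf, mul_assoc, mul_div_assoc, ← tsum_mul_left]

end egf

noncomputable def kummerCoeff (d a : ℝ) (i : ℕ) : ℝ := poch a i * d ^ i / i !

lemma abs_kummerCoeff_le (d a : ℝ) (i : ℕ) :
    |kummerCoeff d a i| ≤ 1 * (max 1 |a| * |d|) ^ i := by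
  rw [kummerCoeff, mul_div_right_comm, abs_mul, abs_pow, one_mul, mul_pow]
  gcongr
  exact abs_poch_div_factorial_le a i

lemma kummerCoeff_succ (d a : ℝ) (i : ℕ) :
    kummerCoeff d (a + 1) (i + 1) = kummerCoeff d a (i + 1) + d * kummerCoeff d (a + 1) i := by
  simp only [kummerCoeff, poch_succ (a + 1), poch_succ' a, Nat.factorial_succ]
  push_cast
  field_simp
  ring

lemma egf_kummerCoeff_add_one (d a : ℝ) (n : ℕ) (t : ℝ) :
    egf (kummerCoeff d (a + 1)) n t
      = egf (kummerCoeff d a) n t + d * egf (kummerCoeff d (a + 1)) (n + 1) t := by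
  have hsucc (i : ℕ) :
      |kummerCoeff d a (i + 1)| ≤ max 1 |a| * |d| * (max 1 |a| * |d|) ^ i := by
    simpa [pow_succ'] using abs_kummerCoeff_le d a (i + 1)
  have hmul (i : ℕ) : |d * kummerCoeff d (a + 1) i| ≤ |d| * (max 1 |a + 1| * |d|) ^ i := by
    rw [abs_mul]
    exact mul_le_mul_of_nonneg_left ((abs_kummerCoeff_le d (a + 1) i).trans_eq (one_mul _))
      (abs_nonneg d)
  have h0 : kummerCoeff d (a + 1) 0 = kummerCoeff d a 0 := by simp [kummerCoeff, poch]
  rw [egf_eq_add_egf_succ (abs_kummerCoeff_le d (a + 1)),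
    egf_eq_add_egf_succ (abs_kummerCoeff_le d a)]
  simp only [kummerCoeff_succ]
  rw [egf_add hsucc hmul, egf_const_mul, h0]
  ring

lemma pow_div_factorial_mul_hyp1F1 (d a : ℝ) (n : ℕ) (t : ℝ) :
    t ^ n / n ! * hyp1F1 a (n + 1) (d * t) = egf (kummerCoeff d a) n t := by
  rw [hyp1F1, ← tsum_mul_left]
  refine tsum_congr fun i => ?_
  have h := poch_natCast_add_one_mul_factorial n i
  have hp : poch (n + 1) i ≠ 0 := left_ne_zero_of_mul (h.trans_ne (by positivity))
  rw [kummerCoeff, ← h, pow_add, mul_pow]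
  field_simp

lemma conv_exp_eq {l μ : ℝ} {F G : ℝ → ℝ} (hF : Continuous F)
    (hG : ∀ v, HasDerivAt G (F v + (μ - l) * G v) v) (hG0 : G 0 = 0) (t : ℝ) :
    conv (fun s => exp (-l * s)) (fun s => exp (-μ * s) * F s) t = exp (-μ * t) * G t := by
  have hH (v : ℝ) :
      HasDerivAt (fun v => exp ((l - μ) * v) * G v) (exp ((l - μ) * v) * F v) v := by
    have hexp : HasDerivAt (fun v => exp ((l - μ) * v)) (exp ((l - μ) * v) * (l - μ)) v := by
      simpa using ((hasDerivAt_id v).const_mul (l - μ)).exp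
    exact (hexp.mul (hG v)).congr_deriv (by ring)
  have hint : IntervalIntegrable (fun v => exp ((l - μ) * v) * F v) MeasureTheory.volume 0 t :=
    (by fun_prop : Continuous fun v => exp ((l - μ) * v) * F v).intervalIntegrable 0 t
  calc conv (fun s => exp (-l * s)) (fun s => exp (-μ * s) * F s) t
      = ∫ v in (0 : ℝ)..t, exp (-l * t) * (exp ((l - μ) * v) * F v) := by
        refine intervalIntegral.integral_congr fun v _ => ?_
        simp only [← mul_assoc, ← exp_add]
        ring_nf
    _ = exp (-μ * t) * G t := by
        rw [intervalIntegral.integral_const_mul, intervalIntegral.integral_eq_sub_of_hasDerivAt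
          (fun v _ => hH v) hint, hG0, mul_zero, sub_zero, ← mul_assoc, ← exp_add]
        ring_nf

lemma conv_add_left {g₁ g₂ h : ℝ → ℝ} (hg₁ : Continuous g₁) (hg₂ : Continuous g₂)
    (hh : Continuous h) (t : ℝ) :
    conv (fun s => g₁ s + g₂ s) h t = conv g₁ h t + conv g₂ h t := by
  simp only [conv, add_mul]
  exact intervalIntegral.integral_add
    ((by fun_prop : Continuous fun v => g₁ (t - v) * h v).intervalIntegrable _ _)
    ((by fun_prop : Continuous fun v => g₂ (t - v) * h v).intervalIntegrable _ _)

lemma conv_add_right {g h₁ h₂ : ℝ → ℝ} (hg : Continuous g) (hh₁ : Continuous h₁)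
    (hh₂ : Continuous h₂) (t : ℝ) :
    conv g (fun s => h₁ s + h₂ s) t = conv g h₁ t + conv g h₂ t := by
  simp only [conv, mul_add]
  exact intervalIntegral.integral_add
    ((by fun_prop : Continuous fun v => g (t - v) * h₁ v).intervalIntegrable _ _)
    ((by fun_prop : Continuous fun v => g (t - v) * h₂ v).intervalIntegrable _ _)

lemma conv_const_mul_left (c : ℝ) (g h : ℝ → ℝ) (t : ℝ) :
    conv (fun s => c * g s) h t = c * conv g h t := by
  simp only [conv, mul_assoc, intervalIntegral.integral_const_mul]

lemma conv_const_mul_right (c : ℝ) (g h : ℝ → ℝ) (t : ℝ) :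
    conv g (fun s => c * h s) t = c * conv g h t := by
  simp only [conv, mul_left_comm _ c, intervalIntegral.integral_const_mul]

lemma conv_sum_right {ι : Type*} (I : Finset ι) {g : ℝ → ℝ} {h : ι → ℝ → ℝ} (hg : Continuous g)
    (hh : ∀ i ∈ I, Continuous (h i)) (t : ℝ) :
    conv g (fun s => ∑ i ∈ I, h i s) t = ∑ i ∈ I, conv g (h i) t := by
  simp only [conv, mul_sum]
  exact intervalIntegral.integral_finsetSum fun i hi =>
    ((hg.comp (continuous_const.sub continuous_id)).mul (hh i hi)).intervalIntegrable _ _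

/-- For natural `1 ≤ a ≤ n` this is the convolution of `t^(a-1) e^(-αt)/(a-1)!` with
`t^(n-a) e^(-βt)/(n-a)!`. -/
noncomputable def gammaConvKernel (α β a : ℝ) (n : ℕ) (t : ℝ) : ℝ :=
  exp (-β * t) * (t ^ n / n ! * hyp1F1 a (n + 1) ((β - α) * t))

section gammaConvKernel

variable (α β a : ℝ) (n : ℕ)

lemma gammaConvKernel_eq_egf :
    gammaConvKernel α β a n = fun t => exp (-β * t) * egf (kummerCoeff (β - α) a) n t := by
  funext t
  rw [gammaConvKernel, pow_div_factorial_mul_hyp1F1]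

@[fun_prop]
lemma continuous_gammaConvKernel : Continuous (gammaConvKernel α β a (n + 1)) := by
  rw [gammaConvKernel_eq_egf]
  exact (by fun_prop : Continuous fun t => exp (-β * t)).mul
    (continuous_egf (abs_kummerCoeff_le _ a) n)

lemma conv_exp_gammaConvKernel_beta (t : ℝ) :
    conv (fun s => exp (-β * s)) (gammaConvKernel α β a (n + 1)) t
      = gammaConvKernel α β a (n + 2) t := by
  rw [gammaConvKernel_eq_egf, gammaConvKernel_eq_egf]
  refine conv_exp_eq (continuous_egf (abs_kummerCoeff_le _ a) n) (fun v => ?_)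
    (egf_succ_zero _ _) t
  simpa using hasDerivAt_egf (abs_kummerCoeff_le _ a) (n + 1) v

lemma conv_exp_gammaConvKernel_alpha (t : ℝ) :
    conv (fun s => exp (-α * s)) (gammaConvKernel α β a (n + 1)) t
      = gammaConvKernel α β (a + 1) (n + 2) t := by
  rw [gammaConvKernel_eq_egf, gammaConvKernel_eq_egf]
  refine conv_exp_eq (continuous_egf (abs_kummerCoeff_le _ a) n) (fun v => ?_)
    (egf_succ_zero _ _) t
  rw [← egf_kummerCoeff_add_one]
  exact hasDerivAt_egf (abs_kummerCoeff_le _ (a + 1)) (n + 1) v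

lemma conv_mixture_gammaConvKernel (A B t : ℝ) :
    conv (fun s => A * exp (-α * s) + B * exp (-β * s)) (gammaConvKernel α β a (n + 1)) t
      = A * gammaConvKernel α β (a + 1) (n + 2) t + B * gammaConvKernel α β a (n + 2) t := by
  rw [conv_add_left (by fun_prop) (by fun_prop) (by fun_prop),
    conv_const_mul_left, conv_const_mul_left, conv_exp_gammaConvKernel_alpha,
    conv_exp_gammaConvKernel_beta]

end gammaConvKernel

lemma cpm_mixture_eq (α β A B : ℝ) (m : ℕ) :
    cpm (fun s => A * exp (-α * s) + B * exp (-β * s))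
        (fun s => A * gammaConvKernel α β 2 1 s + B * gammaConvKernel α β 0 1 s) m
      = fun t => ∑ r ∈ range (m + 1), (m.choose r : ℝ) * A ^ r * B ^ (m - r) *
          (A * gammaConvKernel α β (r + 2) (m + 1) t + B * gammaConvKernel α β r (m + 1) t) := by
  induction m with
  | zero => funext t; simp [cpm]
  | succ k ih =>
    funext t
    have hf : Continuous fun s => A * exp (-α * s) + B * exp (-β * s) := by fun_prop
    set G : ℕ → ℝ := fun j =>
      A * gammaConvKernel α β (j + 2) (k + 2) t + B * gammaConvKernel α β j (k + 2) t
    have hterm (r : ℕ) : conv (fun s => A * exp (-α * s) + B * exp (-β * s))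
        (fun s => (k.choose r : ℝ) * A ^ r * B ^ (k - r) *
          (A * gammaConvKernel α β (r + 2) (k + 1) s + B * gammaConvKernel α β r (k + 1) s)) t
        = (k.choose r : ℝ) * A ^ r * B ^ (k - r) * (A * G (r + 1) + B * G r) := by
      rw [conv_const_mul_right, conv_add_right hf (by fun_prop) (by fun_prop),
        conv_const_mul_right, conv_const_mul_right, conv_mixture_gammaConvKernel,
        conv_mixture_gammaConvKernel]
      simp only [G]
      push_cast
      ring_nf
    rw [cpm, ih, conv_sum_right _ hf fun r _ => by fun_prop, sum_congr rfl fun r _ => hterm r]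
    calc ∑ r ∈ range (k + 1), (k.choose r : ℝ) * A ^ r * B ^ (k - r) * (A * G (r + 1) + B * G r)
        = ∑ r ∈ range (k + 1), (k.choose r : ℝ) * (A ^ r * B ^ (k + 1 - r) * G r)
          + ∑ r ∈ range (k + 1), (k.choose r : ℝ) * (A ^ (r + 1) * B ^ (k - r) * G (r + 1)) := by
          rw [← sum_add_distrib]
          refine sum_congr rfl fun r hr => ?_
          rw [Nat.sub_add_comm (mem_range_succ_iff.mp hr)]
          ring
      _ = ∑ r ∈ range (k + 2), ((k + 1).choose r : ℝ) * (A ^ r * B ^ (k + 1 - r) * G r) :=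
          (sum_choose_succ_mul (fun i j => A ^ i * B ^ j * G i) k).symm
      _ = _ := sum_congr rfl fun r _ => by simp only [G]; ring

theorem mixed_exponential_conv_hyp1F1_general (p q α β : ℝ)
    (f f₁ : ℝ → ℝ) (hf : f = fun t => p * α * exp (-α * t) + q * β * exp (-β * t))
    (hf₁ : f₁ = fun t => t * f t) :
    ∀ (m : ℕ) (t : ℝ), 0 < t →
      cpm f f₁ m t
        = p * α * ∑ r ∈ range (m + 1),
            (m.choose r : ℝ) * (α * p) ^ r * (β * q) ^ (m - r) *
              (exp (-β * t) * t ^ (m + 1) / Gamma (m + 2)) *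
              hyp1F1 (r + 2) (m + 2) ((β - α) * t)
          + q * β * ∑ r ∈ range (m + 1),
            (m.choose r : ℝ) * (α * p) ^ r * (β * q) ^ (m - r) *
              (exp (-β * t) * t ^ (m + 1) / Gamma (m + 2)) *
              hyp1F1 r (m + 2) ((β - α) * t) := by
  intro m t _
  have hf₁' : f₁ = fun s =>
      p * α * gammaConvKernel α β 2 1 s + q * β * gammaConvKernel α β 0 1 s := by
    funext s
    simp only [hf₁, hf, gammaConvKernel, Nat.cast_one, one_add_one_eq_two, hyp1F1_self two_pos,
      hyp1F1_zero_left, pow_one, Nat.factorial_one, div_one]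
    rw [mul_left_comm _ s, ← mul_assoc (exp _), ← exp_add]
    ring_nf
  have hΓ : Gamma (m + 2) = (m + 1)! := by
    rw [show (m : ℝ) + 2 = (m + 1 : ℕ) + 1 by push_cast; ring, Gamma_nat_eq_factorial]
  rw [hf₁', hf, cpm_mixture_eq, mul_sum, mul_sum, ← sum_add_distrib]
  refine sum_congr rfl fun r _ => ?_
  simp only [gammaConvKernel, hΓ]
  push_cast
  ring_nf

/-- `(f^{*m} * f₁)(t)` for the mixed exponential density, expressed via `₁F₁`. -/
theorem mixed_exponential_conv_hyp1F1 (p q α β : ℝ) (hp : 0 < p) (hp1 : p < 1)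
    (hq : q = 1 - p) (hα : 0 < α) (hαβ : α < β)
    (f f₁ : ℝ → ℝ) (hf : f = fun t => p * α * exp (-α * t) + q * β * exp (-β * t))
    (hf₁ : f₁ = fun t => t * f t) :
    ∀ (m : ℕ) (t : ℝ), 0 < t →
      cpm f f₁ m t
        = p * α * ∑ r ∈ range (m + 1),
            (m.choose r : ℝ) * (α * p) ^ r * (β * q) ^ (m - r) *
              (exp (-β * t) * t ^ (m + 1) / Gamma (m + 2)) *
              hyp1F1 (r + 2) (m + 2) ((β - α) * t)
          + q * β * ∑ r ∈ range (m + 1),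
            (m.choose r : ℝ) * (α * p) ^ r * (β * q) ^ (m - r) *
              (exp (-β * t) * t ^ (m + 1) / Gamma (m + 2)) *
              hyp1F1 r (m + 2) ((β - α) * t) :=
  mixed_exponential_conv_hyp1F1_general p q α β f f₁ hf hf₁
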